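/- arXiv:2203.16283 — 2 statements merged into one kernel-verified Lean document; each statement's English description precedes it below -/
import Mathlib

section
/- Let 𝕋 ⊆ ℝ be closed with inf 𝕋 = -∞ and sup 𝕋 = +∞, let t₀ ∈ 𝕋, and define for t ∈ 𝕋, t ≥ t₀: s(t) = m([t₀,t] ∩ 𝕋) + ∑_{τ ∈ [t₀,t) ∩ 𝕋, μ(τ) > 0} log(1 + μ(τ)), where m is Lebesgue measure and μ(τ) = σ(τ) - τ is the graininess. Then s is strictly monotone increasing on 𝕋 ∩ [t₀,∞), s(t₀) = 0, and |s(t)| ≤ t - t₀ for all t ∈ 𝕋, t ≥ t₀. -/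
open scoped ENNReal

/-- Forward jump operator of a time scale. -/
noncomputable def tsSigma (T : Set ℝ) (t : ℝ) : ℝ := sInf {u : ℝ | u ∈ T ∧ t < u}

/-- Graininess function of a time scale. -/
noncomputable def tsMu (T : Set ℝ) (t : ℝ) : ℝ := tsSigma T t - t

/-- Renormalization function on `𝕋 ∩ [t₀, ∞)`:
`s(t) = m([t₀,t] ∩ 𝕋) + ∑_{τ ∈ [t₀,t) ∩ 𝕋, μ(τ)>0} log(1 + μ(τ))`. -/
noncomputable def tsRenorm (T : Set ℝ) (t₀ t : ℝ) : ℝ :=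
  (MeasureTheory.volume (Set.Icc t₀ t ∩ T)).toReal +
    ∑' τ : {τ : ℝ // τ ∈ T ∧ τ ∈ Set.Ico t₀ t ∧ 0 < tsMu T τ},
      Real.log (1 + tsMu T (τ : ℝ))

/-!
The open intervals `(τ, σ τ)` attached to the points `τ ∈ 𝕋` of positive graininess are pairwise
disjoint and miss `𝕋`, so those in `[t₀, t]` fill part of `[t₀, t] \ 𝕋`. Hence the total graininess
over `[t₀, t)` plus `m([t₀, t] ∩ 𝕋)` is at most `t - t₀`, and `log (1 + μ) ≤ μ` gives the bound.
For `t < u` in `𝕋`, `s u - s t = m((t, u] ∩ 𝕋) + ∑ log (1 + μ)` over the gaps in `[t, u)`: either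
there is such a gap, or `[t, u] ⊆ 𝕋` because `𝕋` is closed, and in both cases the increment is
positive.
-/

open MeasureTheory Set Real

variable {T : Set ℝ}

lemma tsSigma_le_of_lt {t u : ℝ} (hu : u ∈ T) (htu : t < u) : tsSigma T t ≤ u :=
  csInf_le ⟨t, fun _ hv => hv.2.le⟩ ⟨hu, htu⟩

lemma disjoint_Ioo_tsSigma (t : ℝ) : Disjoint (Ioo t (tsSigma T t)) T :=
  disjoint_left.2 fun _ hv hvT => (tsSigma_le_of_lt hvT hv.1).not_gt hv.2

lemma pairwiseDisjoint_Ioo_tsSigma : T.PairwiseDisjoint fun t => Ioo t (tsSigma T t) := by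
  have key {x y : ℝ} (hy : y ∈ T) (hxy : x < y) :
      Disjoint (Ioo x (tsSigma T x)) (Ioo y (tsSigma T y)) :=
    disjoint_left.2 fun _ hz hz' => (hz.2.trans_le (tsSigma_le_of_lt hy hxy)).not_gt hz'.1
  intro x hx y hy hxy
  rcases hxy.lt_or_gt with h | h
  exacts [key hy h, (key hx h).symm]

def tsGaps (T : Set ℝ) (a b : ℝ) : Set ℝ := {τ | τ ∈ T ∧ τ ∈ Ico a b ∧ 0 < tsMu T τ}

lemma tsRenorm_def (t₀ t : ℝ) :
    tsRenorm T t₀ t = (volume (Icc t₀ t ∩ T)).toReal +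
      ∑' τ : tsGaps T t₀ t, log (1 + tsMu T τ) := rfl

lemma countable_tsGaps (a b : ℝ) : (tsGaps T a b).Countable :=
  (pairwiseDisjoint_Ioo_tsSigma.subset fun _ hτ => hτ.1).countable_of_Ioo
    fun _ hτ => sub_pos.1 hτ.2.2

lemma tsum_ofReal_tsMu_add_volume_le {a b : ℝ} (hb : b ∈ T) :
    ∑' τ : tsGaps T a b, ENNReal.ofReal (tsMu T τ) + volume (Icc a b ∩ T) ≤
      ENNReal.ofReal (b - a) := by
  have hdisj := pairwiseDisjoint_Ioo_tsSigma.subset fun τ (hτ : τ ∈ tsGaps T a b) => hτ.1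
  set G := ⋃ τ ∈ tsGaps T a b, Ioo τ (tsSigma T τ)
  have hG : volume G = ∑' τ : tsGaps T a b, ENNReal.ofReal (tsMu T τ) := by
    rw [measure_biUnion (countable_tsGaps a b) hdisj fun _ _ => measurableSet_Ioo]
    simp only [Real.volume_Ioo, tsMu]
  have hGsub : G ⊆ Icc a b := iUnion₂_subset fun τ hτ =>
    Ioo_subset_Icc_self.trans (Icc_subset_Icc hτ.2.1.1 (tsSigma_le_of_lt hb hτ.2.1.2))
  have hGT : Disjoint G T := disjoint_iUnion₂_left.2 fun τ _ => disjoint_Ioo_tsSigma τ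
  calc _ = volume (G ∪ Icc a b ∩ T) := by
        rw [measure_union' (hGT.mono_right inter_subset_right)
          (.biUnion (countable_tsGaps a b) fun _ _ => measurableSet_Ioo), hG]
    _ ≤ volume (Icc a b) := measure_mono (union_subset hGsub inter_subset_left)
    _ = _ := Real.volume_Icc

lemma summable_tsMu {a b : ℝ} (hb : b ∈ T) : Summable fun τ : tsGaps T a b => tsMu T τ := by
  have hfin : ∑' τ : tsGaps T a b, ENNReal.ofReal (tsMu T τ) ≠ ⊤ :=
    ne_top_of_le_ne_top ENNReal.ofReal_ne_top
      (le_self_add.trans (tsum_ofReal_tsMu_add_volume_le hb))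
  exact (ENNReal.summable_toReal hfin).congr fun τ => ENNReal.toReal_ofReal τ.2.2.2.le

lemma tsum_tsMu_add_volume_le {a b : ℝ} (hb : b ∈ T) (hab : a ≤ b) :
    ∑' τ : tsGaps T a b, tsMu T τ + (volume (Icc a b ∩ T)).toReal ≤ b - a := by
  have key := tsum_ofReal_tsMu_add_volume_le (a := a) hb
  have hvol : volume (Icc a b ∩ T) ≠ ⊤ :=
    ne_top_of_le_ne_top ENNReal.ofReal_ne_top (le_add_self.trans key)
  rw [← ENNReal.ofReal_le_ofReal_iff (sub_nonneg.2 hab),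
    ENNReal.ofReal_add (tsum_nonneg fun τ => τ.2.2.2.le) ENNReal.toReal_nonneg,
    ENNReal.ofReal_tsum_of_nonneg (fun τ => τ.2.2.2.le) (summable_tsMu hb),
    ENNReal.ofReal_toReal hvol]
  exact key

lemma log_one_add_tsMu_pos {a b τ : ℝ} (hτ : τ ∈ tsGaps T a b) : 0 < log (1 + tsMu T τ) :=
  log_pos (by linarith [hτ.2.2])

lemma log_one_add_tsMu_le {a b τ : ℝ} (hτ : τ ∈ tsGaps T a b) :
    log (1 + tsMu T τ) ≤ tsMu T τ := by
  linarith [log_le_sub_one_of_pos (by linarith [hτ.2.2] : 0 < 1 + tsMu T τ)]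

lemma summable_log_one_add_tsMu {a b : ℝ} (hb : b ∈ T) :
    Summable fun τ : tsGaps T a b => log (1 + tsMu T τ) :=
  (summable_tsMu hb).of_nonneg_of_le (fun τ => (log_one_add_tsMu_pos τ.2).le)
    fun τ => log_one_add_tsMu_le τ.2

lemma tsRenorm_nonneg (t₀ t : ℝ) : 0 ≤ tsRenorm T t₀ t :=
  add_nonneg ENNReal.toReal_nonneg (tsum_nonneg fun τ => (log_one_add_tsMu_pos τ.2).le)

lemma tsRenorm_le {t₀ t : ℝ} (ht : t ∈ T) (h₀ : t₀ ≤ t) : tsRenorm T t₀ t ≤ t - t₀ := by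
  have hlog := (summable_log_one_add_tsMu (a := t₀) ht).tsum_le_tsum
    (fun τ => log_one_add_tsMu_le τ.2) (summable_tsMu ht)
  linarith [tsum_tsMu_add_volume_le ht h₀, tsRenorm_def (T := T) t₀ t]

lemma tsRenorm_self (T : Set ℝ) (t₀ : ℝ) : tsRenorm T t₀ t₀ = 0 := by
  have : IsEmpty (tsGaps T t₀ t₀) := ⟨fun τ => (Ico_self t₀ ▸ τ.2.2.1 : τ.1 ∈ (∅ : Set ℝ))⟩
  rw [tsRenorm_def, Icc_self, measure_mono_null inter_subset_left Real.volume_singleton,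
    tsum_empty]
  simp

lemma tsRenorm_eq_add (hT : MeasurableSet T) {t₀ t u : ℝ} (ht : t ∈ T) (hu : u ∈ T)
    (h₀ : t₀ ≤ t) (htu : t ≤ u) :
    tsRenorm T t₀ u = tsRenorm T t₀ t +
      ((volume (Ioc t u ∩ T)).toReal + ∑' τ : tsGaps T t u, log (1 + tsMu T τ)) := by
  have hvol : volume (Icc t₀ u ∩ T) = volume (Icc t₀ t ∩ T) + volume (Ioc t u ∩ T) := by
    rw [← Icc_union_Ioc_eq_Icc h₀ htu, union_inter_distrib_right,
      measure_union (disjoint_left.2 fun _ h h' => h'.1.1.not_ge h.1.2)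
        (measurableSet_Ioc.inter hT)]
  have hgaps : tsGaps T t₀ u = tsGaps T t₀ t ∪ tsGaps T t u := by
    ext τ
    simp only [tsGaps, mem_ofPred_eq, mem_union, ← Ico_union_Ico_eq_Ico h₀ htu]
    tauto
  have hdisj : Disjoint (tsGaps T t₀ t) (tsGaps T t u) :=
    disjoint_left.2 fun _ h h' => h.2.1.2.not_ge h'.2.1.1
  rw [tsRenorm_def, tsRenorm_def, hvol,
    ENNReal.toReal_add (measure_mono inter_subset_left |>.trans_lt measure_Icc_lt_top).ne
      (measure_mono inter_subset_left |>.trans_lt measure_Ioc_lt_top).ne,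
    hgaps, Summable.tsum_union_disjoint (f := fun τ => log (1 + tsMu T τ)) hdisj
      (summable_log_one_add_tsMu ht) (summable_log_one_add_tsMu hu)]
  ring

lemma nonempty_tsGaps_of_notMem (hT : IsClosed T) {t u x : ℝ} (ht : t ∈ T) (hu : u ∈ T)
    (hx : x ∈ Icc t u) (hxT : x ∉ T) : (tsGaps T t u).Nonempty := by
  -- `τ`, the last point of `T` before `x`, has `x` in its gap `(τ, σ τ]`.
  set C := T ∩ Icc t x
  have hCbdd : BddAbove C := ⟨x, fun _ hv => hv.2.2⟩
  set τ := sSup C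
  have hτ : τ ∈ C := (hT.inter isClosed_Icc).csSup_mem ⟨t, ht, le_rfl, hx.1⟩ hCbdd
  have hτx : τ < x := hτ.2.2.lt_of_ne fun h => hxT (h ▸ hτ.1)
  have hxσ : x ≤ tsSigma T τ := by
    refine le_csInf ⟨u, hu, hτx.trans_le hx.2⟩ fun v ⟨hvT, hτv⟩ => le_of_not_gt fun hvx => ?_
    have hvC : v ∈ C := ⟨hvT, hτ.2.1.trans hτv.le, hvx.le⟩
    exact (le_csSup hCbdd hvC).not_gt hτv
  exact ⟨τ, hτ.1, ⟨hτ.2.1, hτx.trans_le hx.2⟩, sub_pos.2 (hτx.trans_le hxσ)⟩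

lemma volume_Ioc_inter_add_tsum_pos (hT : IsClosed T) {t u : ℝ} (ht : t ∈ T) (hu : u ∈ T)
    (htu : t < u) :
    0 < (volume (Ioc t u ∩ T)).toReal + ∑' τ : tsGaps T t u, log (1 + tsMu T τ) := by
  by_cases hsub : Icc t u ⊆ T
  · refine add_pos_of_pos_of_nonneg ?_ (tsum_nonneg fun τ => (log_one_add_tsMu_pos τ.2).le)
    rw [inter_eq_left.2 (Ioc_subset_Icc_self.trans hsub), Real.volume_Ioc,
      ENNReal.toReal_ofReal (sub_nonneg.2 htu.le)]
    exact sub_pos.2 htu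
  · obtain ⟨x, hx, hxT⟩ := not_subset.1 hsub
    obtain ⟨τ, hτ⟩ := nonempty_tsGaps_of_notMem hT ht hu hx hxT
    exact add_pos_of_nonneg_of_pos ENNReal.toReal_nonneg
      ((summable_log_one_add_tsMu hu).tsum_pos (fun τ => (log_one_add_tsMu_pos τ.2).le) ⟨τ, hτ⟩
        (log_one_add_tsMu_pos hτ))

lemma strictMonoOn_tsRenorm (hT : IsClosed T) (t₀ : ℝ) :
    StrictMonoOn (tsRenorm T t₀) (T ∩ Ici t₀) := fun t ht u hu htu => by
  rw [tsRenorm_eq_add hT.measurableSet ht.1 hu.1 ht.2 htu.le]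
  exact lt_add_of_pos_right _ (volume_Ioc_inter_add_tsum_pos hT ht.1 hu.1 htu)

theorem tsRenorm_strictMono_and_bound_general (T : Set ℝ) (hT : IsClosed T) (t₀ : ℝ) :
    StrictMonoOn (tsRenorm T t₀) (T ∩ Set.Ici t₀) ∧
    tsRenorm T t₀ t₀ = 0 ∧
    ∀ t ∈ T, t₀ ≤ t → |tsRenorm T t₀ t| ≤ t - t₀ :=
  ⟨strictMonoOn_tsRenorm hT t₀, tsRenorm_self T t₀, fun _ ht h₀ =>
    (abs_of_nonneg (tsRenorm_nonneg _ _)).trans_le (tsRenorm_le ht h₀)⟩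

/-- The renormalization `s` is strictly increasing on `𝕋 ∩ [t₀, ∞)`, vanishes at `t₀`, and
satisfies `|s(t)| ≤ t - t₀`. -/
theorem tsRenorm_strictMono_and_bound (T : Set ℝ) (hT : IsClosed T)
    (hbelow : ¬BddBelow T) (habove : ¬BddAbove T) (t₀ : ℝ) (ht₀ : t₀ ∈ T) :
    StrictMonoOn (tsRenorm T t₀) (T ∩ Set.Ici t₀) ∧
    tsRenorm T t₀ t₀ = 0 ∧
    ∀ t ∈ T, t₀ ≤ t → |tsRenorm T t₀ t| ≤ t - t₀ :=
  tsRenorm_strictMono_and_bound_general T hT t₀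
end

section
/- (Scalar boundedness of renormalized coefficient.) Suppose a : ℝ → ℝ and μ : ℝ → [0,∞) satisfy: |a(t)| ≤ M, |1/(1 + μ(t)a(t))| ≤ M, and either μ is bounded by some μ̄, or |1/a(t)| ≤ M for all t. Then the function b(t) := log(1 + μ(t)a(t))/log(1 + μ(t)) (interpreted as a(t) when μ(t) = 0) is bounded: there exists C depending only on M (and μ̄ in the first case) with |b(t)| ≤ C for all t with μ(t) > 0 implying 1 + μ(t)a(t) > 0. -/
/-!
Put `u = 1 + μ a`. Then `|u| ≤ 1 + μ M` and, from `u⁻¹ = 1 - μ a u⁻¹`, also `|u⁻¹| ≤ 1 + μ M²`,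
so `|log u| ≤ log (1 + K μ)` with `K = M + M²`. Bernoulli's inequality `1 + K μ ≤ (1 + μ) ^ K`
for `K ≥ 1` then gives `|log u| ≤ max 1 K * log (1 + μ)`, uniformly in `μ`.
-/

namespace Real

theorem log_one_add_mul_le_max_mul_log_one_add {K s : ℝ} (hK : 0 ≤ K) (hs : 0 ≤ s) :
    log (1 + K * s) ≤ max 1 K * log (1 + s) := by
  have hlog : 0 ≤ log (1 + s) := log_nonneg (by linarith)
  rcases le_total K 1 with hK1 | hK1
  · rw [max_eq_left hK1, one_mul]
    exact log_le_log (by positivity) (by nlinarith)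
  · rw [max_eq_right hK1, ← log_rpow (by linarith)]
    exact log_le_log (by positivity) (one_add_mul_self_le_rpow_one_add (by linarith) hK1)

theorem abs_log_le_of_abs_le_of_abs_inv_le {x y : ℝ} (hy : 1 ≤ y) (hx : |x| ≤ y)
    (hxinv : |x⁻¹| ≤ y) : |log x| ≤ log y := by
  rcases eq_or_ne x 0 with rfl | hx0
  · simpa using log_nonneg hy
  rw [abs_le, neg_le, ← log_inv, ← log_abs x, ← log_abs x⁻¹]
  exact ⟨log_le_log (by positivity) hxinv, log_le_log (by positivity) hx⟩

end Real

theorem abs_inv_one_add_le (c : ℝ) : |(1 + c)⁻¹| ≤ 1 + |c| * |(1 + c)⁻¹| := by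
  rcases eq_or_ne (1 + c) 0 with hc | hc
  · simp [hc]
  have hinv : (1 + c)⁻¹ = 1 - c * (1 + c)⁻¹ := by field_simp; ring
  calc |(1 + c)⁻¹| = |1 - c * (1 + c)⁻¹| := by rw [← hinv]
    _ ≤ |1| + |c * (1 + c)⁻¹| := abs_sub _ _
    _ = 1 + |c| * |(1 + c)⁻¹| := by rw [abs_one, abs_mul]

theorem abs_log_one_add_mul_le {m a M : ℝ} (hm : 0 ≤ m) (ha : |a| ≤ M)
    (hinv : |(1 + m * a)⁻¹| ≤ M) : |Real.log (1 + m * a)| ≤ Real.log (1 + (M + M ^ 2) * m) := by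
  have hM : 0 ≤ M := (abs_nonneg a).trans ha
  have hma : |m * a| ≤ m * M := by rw [abs_mul, abs_of_nonneg hm]; gcongr
  apply Real.abs_log_le_of_abs_le_of_abs_inv_le (by nlinarith)
  · calc |1 + m * a| ≤ |1| + |m * a| := abs_add_le _ _
      _ ≤ 1 + (M + M ^ 2) * m := by rw [abs_one]; nlinarith
  · calc |(1 + m * a)⁻¹| ≤ 1 + |m * a| * |(1 + m * a)⁻¹| := abs_inv_one_add_le _
      _ ≤ 1 + m * M * M := by gcongr
      _ ≤ 1 + (M + M ^ 2) * m := by nlinarith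

theorem renormalized_coefficient_bounded_general (a μ : ℝ → ℝ) (M : ℝ)
    (hμnonneg : ∀ t, 0 ≤ μ t)
    (haM : ∀ t, |a t| ≤ M)
    (hregM : ∀ t, |(1 + μ t * a t)⁻¹| ≤ M)
    (b : ℝ → ℝ)
    (hb0 : ∀ t, μ t = 0 → b t = a t)
    (hb : ∀ t, 0 < μ t → b t = Real.log (1 + μ t * a t) / Real.log (1 + μ t)) :
    ∃ C : ℝ, 0 < C ∧ ∀ t, |b t| ≤ C := by
  refine ⟨max 1 (M + M ^ 2), by positivity, fun t => ?_⟩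
  have hM : 0 ≤ M := (abs_nonneg _).trans (haM t)
  rcases (hμnonneg t).eq_or_lt with hμ | hμ
  · rw [hb0 t hμ.symm]
    exact (haM t).trans ((le_add_of_nonneg_right (sq_nonneg M)).trans (le_max_right _ _))
  · have hlog : 0 < Real.log (1 + μ t) := Real.log_pos (by linarith)
    rw [hb t hμ, abs_div, abs_of_pos hlog, div_le_iff₀ hlog]
    calc |Real.log (1 + μ t * a t)| ≤ Real.log (1 + (M + M ^ 2) * μ t) :=
          abs_log_one_add_mul_le hμ.le (haM t) (hregM t)
      _ ≤ max 1 (M + M ^ 2) * Real.log (1 + μ t) :=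
          Real.log_one_add_mul_le_max_mul_log_one_add (by positivity) hμ.le

/-- Scalar analogue of Lemma 2: under uniform bounds on `a` and uniform regressivity,
and either bounded graininess or uniform invertibility of `a`, the renormalized coefficient
`b(t) = log(1 + μ(t)a(t))/log(1 + μ(t))` (equal to `a(t)` when `μ(t) = 0`) is uniformly
bounded. -/
theorem renormalized_coefficient_bounded (a μ : ℝ → ℝ) (M : ℝ) (hM : 0 < M)
    (hμnonneg : ∀ t, 0 ≤ μ t)
    (hreg : ∀ t, 0 < 1 + μ t * a t)
    (haM : ∀ t, |a t| ≤ M)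
    (hregM : ∀ t, |(1 + μ t * a t)⁻¹| ≤ M)
    (halt : (∃ μbar : ℝ, ∀ t, μ t ≤ μbar) ∨ (∀ t, |(a t)⁻¹| ≤ M))
    (b : ℝ → ℝ)
    (hb0 : ∀ t, μ t = 0 → b t = a t)
    (hb : ∀ t, 0 < μ t → b t = Real.log (1 + μ t * a t) / Real.log (1 + μ t)) :
    ∃ C : ℝ, 0 < C ∧ ∀ t, |b t| ≤ C :=
  renormalized_coefficient_bounded_general a μ M hμnonneg haM hregM b hb0 hb
end
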